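/- Let p and q be distinct letters each occurring exactly once in a diversified ∧∨-formula A, and suppose p∧q is a subformula of A. If A ↔ B is a tautology for a diversified ∧∨-formula B containing p and q, then p and q are not disjunctively joined in B, i.e., B has no subformula P∨Q (or Q∨P) with p occurring in P and q occurring in Q. -/
import Mathlib


inductive Form where
  | var : ℕ → Form
  | top : Form
  | bot : Form
  | neg : Form → Form
  | and : Form → Form → Form
  | or  : Form → Form → Form
deriving DecidableEq

namespace Form

def eval (v : ℕ → Bool) : Form → Bool
  | var n => v n
  | top => true
  | bot => false
  | neg A => !(A.eval v)
  | and A B => A.eval v && B.eval v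
  | or A B => A.eval v || B.eval v

def letters : Form → Multiset ℕ
  | var n => {n}
  | top => 0
  | bot => 0
  | neg A => A.letters
  | and A B => A.letters + B.letters
  | or A B => A.letters + B.letters

end Form

/-- `A ↔ B` is a tautology. -/
def TautEquiv (A B : Form) : Prop := ∀ v : ℕ → Bool, A.eval v = B.eval v

/-- `A` is a tautology. -/
def Taut (A : Form) : Prop := ∀ v : ℕ → Bool, A.eval v = true

/-- every letter occurs at most once -/
def Diversified (A : Form) : Prop := A.letters.Nodup

/-- built from letters using only ∧ and ∨ -/
def IsAndOr : Form → Prop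
  | .var _ => True
  | .and A B => IsAndOr A ∧ IsAndOr B
  | .or A B => IsAndOr A ∧ IsAndOr B
  | _ => False

/-- `Subf B A`: B is a subformula of A -/
inductive Subf : Form → Form → Prop
  | refl (A : Form) : Subf A A
  | neg  : Subf A B → Subf A (.neg B)
  | andL : Subf A B → Subf A (.and B C)
  | andR : Subf A C → Subf A (.and B C)
  | orL  : Subf A B → Subf A (.or B C)
  | orR  : Subf A C → Subf A (.or B C)

/-- p and q are disjunctively joined in B -/
def DisjJoined (p q : ℕ) (B : Form) : Prop :=
  ∃ P Q : Form, Subf (P.or Q) B ∧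
    ((p ∈ P.letters ∧ q ∈ Q.letters) ∨ (q ∈ P.letters ∧ p ∈ Q.letters))

theorem mdisj {s t : Multiset ℕ} (h : Disjoint s t) ⦃n : ℕ⦄ (h1 : n ∈ s)
    (h2 : n ∈ t) : False := Multiset.disjoint_left.mp h h1 h2

namespace Form

theorem eval_congr {A : Form} {v v' : ℕ → Bool}
    (h : ∀ n ∈ A.letters, v n = v' n) : A.eval v = A.eval v' := by
  induction A with
  | var n => exact h n (by simp [letters])
  | top => rfl
  | bot => rfl
  | neg A ih => simp [eval, ih h]
  | and A B ihA ihB =>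
      simp only [eval]
      rw [ihA fun n hn => h n (by simp [letters, hn]),
          ihB fun n hn => h n (by simp [letters, hn])]
  | or A B ihA ihB =>
      simp only [eval]
      rw [ihA fun n hn => h n (by simp [letters, hn]),
          ihB fun n hn => h n (by simp [letters, hn])]

theorem eval_true_of {A : Form} {v : ℕ → Bool} (h : IsAndOr A)
    (hv : ∀ n ∈ A.letters, v n = true) : A.eval v = true := by
  induction A with
  | var n => exact hv n (by simp [letters])
  | top => rfl
  | bot => exact absurd h (by simp [IsAndOr])
  | neg A ih => exact absurd h (by simp [IsAndOr])
  | and A B ihA ihB =>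
      simp only [eval, Bool.and_eq_true]
      exact ⟨ihA h.1 fun n hn => hv n (by simp [letters, hn]),
             ihB h.2 fun n hn => hv n (by simp [letters, hn])⟩
  | or A B ihA ihB =>
      simp only [eval, Bool.or_eq_true]
      exact Or.inl (ihA h.1 fun n hn => hv n (by simp [letters, hn]))

theorem eval_false_of {A : Form} {v : ℕ → Bool} (h : IsAndOr A)
    (hv : ∀ n ∈ A.letters, v n = false) : A.eval v = false := by
  induction A with
  | var n => exact hv n (by simp [letters])
  | top => exact absurd h (by simp [IsAndOr])
  | bot => rfl
  | neg A ih => exact absurd h (by simp [IsAndOr])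
  | and A B ihA ihB =>
      simp only [eval, Bool.and_eq_false_iff]
      exact Or.inl (ihA h.1 fun n hn => hv n (by simp [letters, hn]))
  | or A B ihA ihB =>
      simp only [eval, Bool.or_eq_false_iff]
      exact ⟨ihA h.1 fun n hn => hv n (by simp [letters, hn]),
             ihB h.2 fun n hn => hv n (by simp [letters, hn])⟩

theorem subf_mem {A B : Form} (h : Subf A B) : ∀ n ∈ A.letters, n ∈ B.letters := by
  induction h with
  | refl => exact fun n hn => hn
  | neg _ ih => simpa [letters] using ih
  | andL _ ih => intro n hn; simp [letters]; exact Or.inl (ih n hn)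
  | andR _ ih => intro n hn; simp [letters]; exact Or.inr (ih n hn)
  | orL _ ih => intro n hn; simp [letters]; exact Or.inl (ih n hn)
  | orR _ ih => intro n hn; simp [letters]; exact Or.inr (ih n hn)

end Form

/-- valuation updating `w` at `p` and `q`. -/
def upd (w : ℕ → Bool) (p q : ℕ) (a b : Bool) : ℕ → Bool :=
  fun n => if n = p then a else if n = q then b else w n

theorem transparent {A : Form} {p q : ℕ} (hpq : p ≠ q) (hAO : IsAndOr A)
    (hdA : Diversified A) (hconj : Subf ((Form.var p).and (Form.var q)) A) :
    ∃ w : ℕ → Bool, ∀ a b : Bool, A.eval (upd w p q a b) = (a && b) := by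
  induction hconj with
  | refl =>
      exact ⟨fun _ => true, fun a b => by simp [Form.eval, upd, hpq, Ne.symm hpq]⟩
  | neg _ ih => exact absurd hAO (by simp [IsAndOr])
  | @andL C D hs ih =>
      have hC : IsAndOr C := hAO.1
      have hD : IsAndOr D := hAO.2
      have hnd := (Multiset.nodup_add.mp hdA)
      obtain ⟨w, hw⟩ := ih hC hnd.1
      have hpC : p ∈ C.letters := Form.subf_mem hs p (by simp [Form.letters])
      have hqC : q ∈ C.letters := Form.subf_mem hs q (by simp [Form.letters])
      refine ⟨fun n => if n ∈ D.letters then true else w n, fun a b => ?_⟩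
      have hdisj := mdisj hnd.2.2
      simp only [Form.eval]
      have hCeq : C.eval (upd (fun n => if n ∈ D.letters then true else w n) p q a b)
          = C.eval (upd w p q a b) := by
        apply Form.eval_congr
        intro n hn
        have : n ∉ D.letters := fun hD' => hdisj hn hD'
        simp [upd, this]
      have hDeq : D.eval (upd (fun n => if n ∈ D.letters then true else w n) p q a b) = true := by
        apply Form.eval_true_of hD
        intro n hn
        have h1 : n ≠ p := fun h => hdisj (h ▸ hpC) hn
        have h2 : n ≠ q := fun h => hdisj (h ▸ hqC) hn
        simp [upd, h1, h2, hn]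
      rw [hCeq, hDeq, hw a b, Bool.and_true]
  | @andR C D hs ih =>
      have hC : IsAndOr C := hAO.2
      have hD : IsAndOr D := hAO.1
      have hnd := (Multiset.nodup_add.mp hdA)
      obtain ⟨w, hw⟩ := ih hC hnd.2.1
      have hpC : p ∈ C.letters := Form.subf_mem hs p (by simp [Form.letters])
      have hqC : q ∈ C.letters := Form.subf_mem hs q (by simp [Form.letters])
      refine ⟨fun n => if n ∈ D.letters then true else w n, fun a b => ?_⟩
      have hdisj := mdisj hnd.2.2
      simp only [Form.eval]
      have hCeq : C.eval (upd (fun n => if n ∈ D.letters then true else w n) p q a b)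
          = C.eval (upd w p q a b) := by
        apply Form.eval_congr
        intro n hn
        have : n ∉ D.letters := fun hD' => hdisj hD' hn
        simp [upd, this]
      have hDeq : D.eval (upd (fun n => if n ∈ D.letters then true else w n) p q a b) = true := by
        apply Form.eval_true_of hD
        intro n hn
        have h1 : n ≠ p := fun h => hdisj hn (h ▸ hpC)
        have h2 : n ≠ q := fun h => hdisj hn (h ▸ hqC)
        simp [upd, h1, h2, hn]
      rw [hCeq, hDeq, hw a b, Bool.true_and]
  | @orL C D hs ih =>
      have hC : IsAndOr C := hAO.1
      have hD : IsAndOr D := hAO.2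
      have hnd := (Multiset.nodup_add.mp hdA)
      obtain ⟨w, hw⟩ := ih hC hnd.1
      have hpC : p ∈ C.letters := Form.subf_mem hs p (by simp [Form.letters])
      have hqC : q ∈ C.letters := Form.subf_mem hs q (by simp [Form.letters])
      refine ⟨fun n => if n ∈ D.letters then false else w n, fun a b => ?_⟩
      have hdisj := mdisj hnd.2.2
      simp only [Form.eval]
      have hCeq : C.eval (upd (fun n => if n ∈ D.letters then false else w n) p q a b)
          = C.eval (upd w p q a b) := by
        apply Form.eval_congr
        intro n hn
        have : n ∉ D.letters := fun hD' => hdisj hn hD'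
        simp [upd, this]
      have hDeq : D.eval (upd (fun n => if n ∈ D.letters then false else w n) p q a b) = false := by
        apply Form.eval_false_of hD
        intro n hn
        have h1 : n ≠ p := fun h => hdisj (h ▸ hpC) hn
        have h2 : n ≠ q := fun h => hdisj (h ▸ hqC) hn
        simp [upd, h1, h2, hn]
      rw [hCeq, hDeq, hw a b, Bool.or_false]
  | @orR C D hs ih =>
      have hC : IsAndOr C := hAO.2
      have hD : IsAndOr D := hAO.1
      have hnd := (Multiset.nodup_add.mp hdA)
      obtain ⟨w, hw⟩ := ih hC hnd.2.1
      have hpC : p ∈ C.letters := Form.subf_mem hs p (by simp [Form.letters])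
      have hqC : q ∈ C.letters := Form.subf_mem hs q (by simp [Form.letters])
      refine ⟨fun n => if n ∈ D.letters then false else w n, fun a b => ?_⟩
      have hdisj := mdisj hnd.2.2
      simp only [Form.eval]
      have hCeq : C.eval (upd (fun n => if n ∈ D.letters then false else w n) p q a b)
          = C.eval (upd w p q a b) := by
        apply Form.eval_congr
        intro n hn
        have : n ∉ D.letters := fun hD' => hdisj hD' hn
        simp [upd, this]
      have hDeq : D.eval (upd (fun n => if n ∈ D.letters then false else w n) p q a b) = false := by
        apply Form.eval_false_of hD
        intro n hn
        have h1 : n ≠ p := fun h => hdisj hn (h ▸ hpC)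
        have h2 : n ≠ q := fun h => hdisj hn (h ▸ hqC)
        simp [upd, h1, h2, hn]
      rw [hCeq, hDeq, hw a b, Bool.false_or]

theorem disj_restrict {B P Q : Form} {p q : ℕ} (hpq : p ≠ q) (hBO : IsAndOr B)
    (hdB : Diversified B) (hsub : Subf (P.or Q) B)
    (hmem : (p ∈ P.letters ∧ q ∈ Q.letters) ∨ (q ∈ P.letters ∧ p ∈ Q.letters))
    (w : ℕ → Bool) :
    B.eval (upd w p q true true) = true →
      B.eval (upd w p q true false) = true ∨ B.eval (upd w p q false true) = true := by
  induction hsub with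
  | refl =>
      intro h11
      have hnd := Multiset.nodup_add.mp hdB
      have hdisj := mdisj hnd.2.2
      simp only [Form.eval, Bool.or_eq_true] at h11 ⊢
      rcases hmem with ⟨hpP, hqQ⟩ | ⟨hqP, hpQ⟩
      · have hqP : q ∉ P.letters := fun h => hdisj h hqQ
        have hpQ : p ∉ Q.letters := fun h => hdisj hpP h
        have hP : P.eval (upd w p q true true) = P.eval (upd w p q true false) :=
          Form.eval_congr fun n hn => by
            have : n ≠ q := fun h => hqP (h ▸ hn); simp [upd, this]
        have hQ : Q.eval (upd w p q true true) = Q.eval (upd w p q false true) :=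
          Form.eval_congr fun n hn => by
            have : n ≠ p := fun h => hpQ (h ▸ hn); simp [upd, this]
        rcases h11 with h | h
        · exact Or.inl (Or.inl (hP ▸ h))
        · exact Or.inr (Or.inr (hQ ▸ h))
      · have hpP : p ∉ P.letters := fun h => hdisj h hpQ
        have hqQ : q ∉ Q.letters := fun h => hdisj hqP h
        have hP : P.eval (upd w p q true true) = P.eval (upd w p q false true) :=
          Form.eval_congr fun n hn => by
            have : n ≠ p := fun h => hpP (h ▸ hn); simp [upd, this]
        have hQ : Q.eval (upd w p q true true) = Q.eval (upd w p q true false) :=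
          Form.eval_congr fun n hn => by
            have : n ≠ q := fun h => hqQ (h ▸ hn); simp [upd, this]
        rcases h11 with h | h
        · exact Or.inr (Or.inl (hP ▸ h))
        · exact Or.inl (Or.inr (hQ ▸ h))
  | neg _ ih => exact absurd hBO (by simp [IsAndOr])
  | @andL C D hs ih =>
      intro h11
      have hnd := Multiset.nodup_add.mp hdB
      have hdisj := mdisj hnd.2.2
      have hpC : p ∈ C.letters := by
        rcases hmem with ⟨hp, _⟩ | ⟨_, hp⟩
        · exact Form.subf_mem hs p (by simp [Form.letters, hp])
        · exact Form.subf_mem hs p (by simp [Form.letters, hp])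
      have hqC : q ∈ C.letters := by
        rcases hmem with ⟨_, hq⟩ | ⟨hq, _⟩
        · exact Form.subf_mem hs q (by simp [Form.letters, hq])
        · exact Form.subf_mem hs q (by simp [Form.letters, hq])
      have hDind : ∀ a b : Bool, D.eval (upd w p q a b) = D.eval w := by
        intro a b
        apply Form.eval_congr
        intro n hn
        have h1 : n ≠ p := fun h => hdisj (h ▸ hpC) hn
        have h2 : n ≠ q := fun h => hdisj (h ▸ hqC) hn
        simp [upd, h1, h2]
      simp only [Form.eval, Bool.and_eq_true] at h11 ⊢
      rcases ih hBO.1 hnd.1 h11.1 with hc | hc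
      · exact Or.inl ⟨hc, by rw [hDind]; rw [hDind] at h11; exact h11.2⟩
      · exact Or.inr ⟨hc, by rw [hDind]; rw [hDind] at h11; exact h11.2⟩
  | @andR C D hs ih =>
      intro h11
      have hnd := Multiset.nodup_add.mp hdB
      have hdisj := mdisj hnd.2.2
      have hpC : p ∈ C.letters := by
        rcases hmem with ⟨hp, _⟩ | ⟨_, hp⟩
        · exact Form.subf_mem hs p (by simp [Form.letters, hp])
        · exact Form.subf_mem hs p (by simp [Form.letters, hp])
      have hqC : q ∈ C.letters := by
        rcases hmem with ⟨_, hq⟩ | ⟨hq, _⟩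
        · exact Form.subf_mem hs q (by simp [Form.letters, hq])
        · exact Form.subf_mem hs q (by simp [Form.letters, hq])
      have hDind : ∀ a b : Bool, D.eval (upd w p q a b) = D.eval w := by
        intro a b
        apply Form.eval_congr
        intro n hn
        have h1 : n ≠ p := fun h => hdisj hn (h ▸ hpC)
        have h2 : n ≠ q := fun h => hdisj hn (h ▸ hqC)
        simp [upd, h1, h2]
      simp only [Form.eval, Bool.and_eq_true] at h11 ⊢
      rcases ih hBO.2 hnd.2.1 h11.2 with hc | hc
      · exact Or.inl ⟨by rw [hDind]; rw [hDind] at h11; exact h11.1, hc⟩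
      · exact Or.inr ⟨by rw [hDind]; rw [hDind] at h11; exact h11.1, hc⟩
  | @orL C D hs ih =>
      intro h11
      have hnd := Multiset.nodup_add.mp hdB
      have hdisj := mdisj hnd.2.2
      have hpC : p ∈ C.letters := by
        rcases hmem with ⟨hp, _⟩ | ⟨_, hp⟩
        · exact Form.subf_mem hs p (by simp [Form.letters, hp])
        · exact Form.subf_mem hs p (by simp [Form.letters, hp])
      have hqC : q ∈ C.letters := by
        rcases hmem with ⟨_, hq⟩ | ⟨hq, _⟩
        · exact Form.subf_mem hs q (by simp [Form.letters, hq])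
        · exact Form.subf_mem hs q (by simp [Form.letters, hq])
      have hDind : ∀ a b : Bool, D.eval (upd w p q a b) = D.eval w := by
        intro a b
        apply Form.eval_congr
        intro n hn
        have h1 : n ≠ p := fun h => hdisj (h ▸ hpC) hn
        have h2 : n ≠ q := fun h => hdisj (h ▸ hqC) hn
        simp [upd, h1, h2]
      simp only [Form.eval, Bool.or_eq_true] at h11 ⊢
      rcases h11 with hC11 | hD11
      · rcases ih hBO.1 hnd.1 hC11 with hc | hc
        · exact Or.inl (Or.inl hc)
        · exact Or.inr (Or.inl hc)
      · exact Or.inl (Or.inr (by rw [hDind]; rw [hDind] at hD11; exact hD11))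
  | @orR C D hs ih =>
      intro h11
      have hnd := Multiset.nodup_add.mp hdB
      have hdisj := mdisj hnd.2.2
      have hpC : p ∈ C.letters := by
        rcases hmem with ⟨hp, _⟩ | ⟨_, hp⟩
        · exact Form.subf_mem hs p (by simp [Form.letters, hp])
        · exact Form.subf_mem hs p (by simp [Form.letters, hp])
      have hqC : q ∈ C.letters := by
        rcases hmem with ⟨_, hq⟩ | ⟨hq, _⟩
        · exact Form.subf_mem hs q (by simp [Form.letters, hq])
        · exact Form.subf_mem hs q (by simp [Form.letters, hq])
      have hDind : ∀ a b : Bool, D.eval (upd w p q a b) = D.eval w := by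
        intro a b
        apply Form.eval_congr
        intro n hn
        have h1 : n ≠ p := fun h => hdisj hn (h ▸ hpC)
        have h2 : n ≠ q := fun h => hdisj hn (h ▸ hqC)
        simp [upd, h1, h2]
      simp only [Form.eval, Bool.or_eq_true] at h11 ⊢
      rcases h11 with hD11 | hC11
      · exact Or.inl (Or.inl (by rw [hDind]; rw [hDind] at hD11; exact hD11))
      · rcases ih hBO.2 hnd.2.1 hC11 with hc | hc
        · exact Or.inl (Or.inr hc)
        · exact Or.inr (Or.inr hc)

theorem stmt5 (A B : Form) (p q : ℕ) (hpq : p ≠ q)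
    (hAO : IsAndOr A) (hdA : Diversified A)
    (hpA : p ∈ A.letters) (hqA : q ∈ A.letters)
    (hconj : Subf ((Form.var p).and (Form.var q)) A)
    (hBO : IsAndOr B) (hdB : Diversified B)
    (hpB : p ∈ B.letters) (hqB : q ∈ B.letters)
    (h : TautEquiv A B) :
    ¬ DisjJoined p q B := by
  rintro ⟨P, Q, hsub, hmem⟩
  obtain ⟨w, hw⟩ := transparent hpq hAO hdA hconj
  have h11 : B.eval (upd w p q true true) = true := by
    rw [← h]; simpa using hw true true
  have h10 : B.eval (upd w p q true false) = false := by
    rw [← h]; simpa using hw true false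
  have h01 : B.eval (upd w p q false true) = false := by
    rw [← h]; simpa using hw false true
  rcases disj_restrict hpq hBO hdB hsub hmem w h11 with hc | hc
  · rw [h10] at hc; exact Bool.false_ne_true hc
  · rw [h01] at hc; exact Bool.false_ne_true hc
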